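/- (Theorem 3, KKT sufficiency) Fix N ≥ 1, B > 0, T > 0, F > 0, for each i reals 0 < a_{i1} ≤ a_{i2}, and for each (i,j) reals C_{ij} > 0, P_{ij} > 0, R_{ij} ≥ D_{ij} ≥ 0. Let V(d, t) = Σ_{i=1}^N B·t_i·(a_{i1}·2^((d_{i1}+d_{i2})/(B·t_i)) + (a_{i2} − a_{i1})·2^(d_{i2}/(B·t_i)) − a_{i2}) + Σ_{i,j} (R_{ij} − d_{ij})·C_{ij}·P_{ij}. Suppose (d*, t*) is feasible (t*_i > 0, Σ_i t*_i ≤ T, Σ_{i,j} d*_{ij}·C_{ij} ≤ F, D_{ij} ≤ d*_{ij} ≤ R_{ij}), and there exist α ≥ 0, β ≥ 0 with α·(Σ_i t*_i − T) = 0 and β·(Σ_{i,j} d*_{ij}·C_{ij} − F) = 0 such that for every i: ∂V/∂t_i(d*, t*) + α = 0; and for every (i,j), writing G_{ij} = ∂V/∂d_{ij}(d*, t*) + β·C_{ij}: G_{ij} = 0 if D_{ij} < d*_{ij} < R_{ij}, G_{ij} ≥ 0 if d*_{ij} = D_{ij}, and G_{ij} ≤ 0 if d*_{ij} = R_{ij}.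 Then (d*, t*) is a global minimizer: V(d*, t*) ≤ V(d, t) for every feasible (d, t). -/

import Mathlib

/-!
Each offloading term of `V` is a nonnegative combination of perspectives `s · 2^(w / s)` of the
convex function `2^x`, composed with linear maps of `(d, t)`, and the local-computation term is
affine, so `V` is convex on `{t > 0}`. For a convex function differentiable at `x*`,
`V y ≥ V x* + DV(x*) (y - x*)`. The KKT conditions pin down the partial derivatives of `V` at
`x*`, and with them `DV(x*) (y - x*) ≥ 0` for every feasible `y`: the box coordinates contribute
nonnegatively by complementarity, the two budget constraints by complementary slackness.
-/

open Set Finset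

theorem ConvexOn.add_apply_sub_le_of_hasFDerivAt {E : Type*} [NormedAddCommGroup E]
    [NormedSpace ℝ E] {s : Set E} {f : E → ℝ} {f' : E →L[ℝ] ℝ} {x y : E}
    (hf : ConvexOn ℝ s f) (hx : x ∈ s) (hy : y ∈ s) (hf' : HasFDerivAt f f' x) :
    f x + f' (y - x) ≤ f y := by
  have hline := hf.comp_affineMap (AffineMap.lineMap (k := ℝ) x y)
  have hderiv : HasDerivAt (f ∘ AffineMap.lineMap x y) (f' (y - x)) (0 : ℝ) :=
    (AffineMap.lineMap_apply_zero (k := ℝ) x y ▸ hf').comp_hasDerivAt _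
      AffineMap.hasDerivAt_lineMap
  have := hline.le_slope_of_hasDerivAt (by simpa) (by simpa) one_pos hderiv
  simpa [slope_def_field, le_sub_iff_add_le'] using this

theorem ConvexOn.perspective {g : ℝ → ℝ} (hg : ConvexOn ℝ univ g) :
    ConvexOn ℝ {p : ℝ × ℝ | 0 < p.2} fun p => p.2 * g (p.1 / p.2) := by
  refine ⟨convex_halfSpace_gt (LinearMap.snd ℝ ℝ ℝ).isLinear 0, ?_⟩
  rintro ⟨w₁, s₁⟩ (hs₁ : 0 < s₁) ⟨w₂, s₂⟩ (hs₂ : 0 < s₂) a b ha hb hab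
  simp only [Prod.smul_mk, Prod.mk_add_mk, smul_eq_mul]
  have hS : 0 < a * s₁ + b * s₂ := by
    rcases ha.eq_or_lt with rfl | ha'
    · simp_all
    · positivity
  have key := hg.2 (mem_univ (w₁ / s₁)) (mem_univ (w₂ / s₂))
    (div_nonneg (mul_nonneg ha hs₁.le) hS.le) (div_nonneg (mul_nonneg hb hs₂.le) hS.le)
    (by field_simp)
  simp only [smul_eq_mul] at key
  set S := a * s₁ + b * s₂
  calc S * g ((a * w₁ + b * w₂) / S)
      = S * g (a * s₁ / S * (w₁ / s₁) + b * s₂ / S * (w₂ / s₂)) := by congr 2; field_simp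
    _ ≤ S * (a * s₁ / S * g (w₁ / s₁) + b * s₂ / S * g (w₂ / s₂)) := by gcongr
    _ = a * (s₁ * g (w₁ / s₁)) + b * (s₂ * g (w₂ / s₂)) := by field_simp

theorem ConvexOn.perspective_comp_linearMap {E : Type*} [AddCommGroup E] [Module ℝ E]
    {g : ℝ → ℝ} (hg : ConvexOn ℝ univ g) (u v : E →ₗ[ℝ] ℝ) :
    ConvexOn ℝ {x | 0 < v x} fun x => v x * g (u x / v x) :=
  hg.perspective.comp_linearMap (u.prod v)

theorem ConvexOn.fun_sum {ι E : Type*} [AddCommGroup E] [Module ℝ E] {s : Set E}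
    {f : ι → E → ℝ} (t : Finset ι) (hs : Convex ℝ s) (hf : ∀ i ∈ t, ConvexOn ℝ s (f i)) :
    ConvexOn ℝ s fun x => ∑ i ∈ t, f i x := by
  classical
  induction t using Finset.induction_on with
  | empty => simpa using convexOn_const 0 hs
  | insert i t hi ih =>
    simp only [Finset.sum_insert hi]
    exact (hf i (mem_insert_self i t)).add (ih fun j hj => hf j (mem_insert_of_mem hj))

theorem convex_setOf_forall_snd_pos {F ι : Type*} [AddCommGroup F] [Module ℝ F] :
    Convex ℝ {p : F × (ι → ℝ) | ∀ i, 0 < p.2 i} := by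
  simp only [ofPred_forall]
  exact convex_iInter fun i => convex_halfSpace_gt
    ((LinearMap.proj i).comp (LinearMap.snd ℝ F (ι → ℝ))).isLinear 0

section PartialDerivatives

variable {ι κ : Type*} [Fintype ι] [Fintype κ] [DecidableEq ι] [DecidableEq κ]

theorem ContinuousLinearMap.apply_prod_eq_sum
    (L : (ι → κ → ℝ) × (ι → ℝ) →L[ℝ] ℝ) (u : ι → κ → ℝ) (v : ι → ℝ) :
    L (u, v) = ∑ i, ∑ j, u i j * L (Pi.single i (Pi.single j 1), 0)
      + ∑ i, v i * L (0, Pi.single i 1) := by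
  have hdecomp : (u, v) =
      ∑ i, ∑ j, u i j • ((Pi.single i (Pi.single j 1), 0) : (ι → κ → ℝ) × (ι → ℝ))
        + ∑ i, v i • ((0, Pi.single i 1) : (ι → κ → ℝ) × (ι → ℝ)) := by
    ext <;> simp [Prod.fst_sum, Prod.snd_sum, Finset.sum_apply, Pi.single_apply]
  conv_lhs => rw [hdecomp]
  simp only [map_add, map_sum, map_smul, smul_eq_mul]

variable {F G : Type*} [NormedAddCommGroup F] [NormedSpace ℝ F]
  [NormedAddCommGroup G] [NormedSpace ℝ G]

theorem HasFDerivAt.hasDerivAt_update_snd {f : F × (ι → ℝ) → ℝ} {L : F × (ι → ℝ) →L[ℝ] ℝ}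
    {x : F} {t : ι → ℝ} (hf : HasFDerivAt f L (x, t)) (i : ι) :
    HasDerivAt (fun s => f (x, Function.update t i s)) (L (0, Pi.single i 1)) (t i) := by
  rw [← Function.update_eq_self i t] at hf
  exact hf.comp_hasDerivAt _ ((hasDerivAt_const _ x).prodMk (hasDerivAt_update t i _))

theorem HasFDerivAt.hasDerivAt_update_fst {f : (ι → κ → ℝ) × G → ℝ}
    {L : (ι → κ → ℝ) × G →L[ℝ] ℝ} {d : ι → κ → ℝ} {y : G} (hf : HasFDerivAt f L (d, y))
    (i : ι) (j : κ) :
    HasDerivAt (fun s => f (Function.update d i (Function.update (d i) j s), y))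
      (L (Pi.single i (Pi.single j 1), 0)) (d i j) := by
  have hpath : HasDerivAt (fun s => Function.update d i (Function.update (d i) j s))
      (Pi.single i (Pi.single j 1)) (d i j) := by
    refine ((hasFDerivAt_update d (i := i) _).comp_hasDerivAt _
      (hasDerivAt_update (d i) j (d i j))).congr_deriv ?_
    ext k l
    by_cases hk : k = i
    · subst hk; simp
    · simp [hk]
  have hd : Function.update d i (Function.update (d i) j (d i j)) = d := by simp
  rw [← hd] at hf
  exact hf.comp_hasDerivAt _ (hpath.prodMk (hasDerivAt_const _ y))

end PartialDerivatives

section Energy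

variable {ι : Type*} [Fintype ι]

/-- The energy `V` of the problem, as a function of the pair `p = (d, t)`. -/
noncomputable def totalEnergy (B : ℝ) (a₁ a₂ : ι → ℝ) (C P R : ι → Fin 2 → ℝ)
    (p : (ι → Fin 2 → ℝ) × (ι → ℝ)) : ℝ :=
  (∑ i, B * p.2 i * (a₁ i * (2 : ℝ) ^ ((p.1 i 0 + p.1 i 1) / (B * p.2 i))
      + (a₂ i - a₁ i) * (2 : ℝ) ^ (p.1 i 1 / (B * p.2 i)) - a₂ i))
    + ∑ i, ∑ j, (R i j - p.1 i j) * C i j * P i j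

theorem convexOn_offloadEnergy {E : Type*} [AddCommGroup E] [Module ℝ E] {a₁ a₂ : ℝ}
    (ha₁ : 0 ≤ a₁) (ha₁₂ : a₁ ≤ a₂) (x y s : E →ₗ[ℝ] ℝ) :
    ConvexOn ℝ {p | 0 < s p} fun p =>
      s p * (a₁ * (2 : ℝ) ^ ((x p + y p) / s p) + (a₂ - a₁) * (2 : ℝ) ^ (y p / s p) - a₂) := by
  have h2 := convexOn_rpow_left (b := 2) two_pos
  have hsum := ((h2.perspective_comp_linearMap (x + y) s).smul ha₁).add
    (((h2.perspective_comp_linearMap y s).smul (sub_nonneg.2 ha₁₂)).add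
      (((-a₂) • s).convexOn (convex_halfSpace_gt s.isLinear 0)))
  refine hsum.congr fun p _ => ?_
  simp only [Pi.add_apply, LinearMap.add_apply, LinearMap.smul_apply, smul_eq_mul]
  ring

theorem convexOn_totalEnergy {B : ℝ} (hB : 0 < B) {a₁ a₂ : ι → ℝ} (ha₁ : ∀ i, 0 ≤ a₁ i)
    (ha₁₂ : ∀ i, a₁ i ≤ a₂ i) (C P R : ι → Fin 2 → ℝ) :
    ConvexOn ℝ {p | ∀ i, 0 < p.2 i} (totalEnergy B a₁ a₂ C P R) := by
  let d (i : ι) (j : Fin 2) : (ι → Fin 2 → ℝ) × (ι → ℝ) →ₗ[ℝ] ℝ :=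
    (LinearMap.proj (R := ℝ) (φ := fun _ : Fin 2 => ℝ) j).comp
      ((LinearMap.proj i).comp (LinearMap.fst ℝ _ _))
  let t (i : ι) : (ι → Fin 2 → ℝ) × (ι → ℝ) →ₗ[ℝ] ℝ :=
    (LinearMap.proj (R := ℝ) (φ := fun _ : ι => ℝ) i).comp (LinearMap.snd ℝ _ _)
  have hS := convex_setOf_forall_snd_pos (F := ι → Fin 2 → ℝ) (ι := ι)
  have hoff : ∀ i, ConvexOn ℝ {p | ∀ i, 0 < p.2 i} fun p : (ι → Fin 2 → ℝ) × (ι → ℝ) =>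
      B * p.2 i * (a₁ i * (2 : ℝ) ^ ((p.1 i 0 + p.1 i 1) / (B * p.2 i))
        + (a₂ i - a₁ i) * (2 : ℝ) ^ (p.1 i 1 / (B * p.2 i)) - a₂ i) := fun i =>
    (convexOn_offloadEnergy (ha₁ i) (ha₁₂ i) (d i 0) (d i 1) (B • t i)).subset
      (fun p hp => mul_pos hB (hp i)) hS
  have hlin : ∀ i j, ConvexOn ℝ {p | ∀ i, 0 < p.2 i} fun p : (ι → Fin 2 → ℝ) × (ι → ℝ) =>
      (R i j - p.1 i j) * C i j * P i j := fun i j =>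
    ((((-(C i j * P i j)) • d i j).convexOn hS).add_const (R i j * C i j * P i j)).congr
      fun p _ => by
        change -(C i j * P i j) * p.1 i j + R i j * C i j * P i j = _
        ring
  exact (ConvexOn.fun_sum _ hS fun i _ => hoff i).add
    (ConvexOn.fun_sum _ hS fun i _ => ConvexOn.fun_sum _ hS fun j _ => hlin i j)

theorem differentiableAt_totalEnergy {B : ℝ} (hB : B ≠ 0) (a₁ a₂ : ι → ℝ)
    (C P R : ι → Fin 2 → ℝ) {p : (ι → Fin 2 → ℝ) × (ι → ℝ)} (hp : ∀ i, p.2 i ≠ 0) :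
    DifferentiableAt ℝ (totalEnergy B a₁ a₂ C P R) p := by
  unfold totalEnergy
  fun_prop (disch := simp [hB, hp])

end Energy

theorem sub_mul_nonneg_of_complementarity {l u x y g : ℝ} (hy : l ≤ y ∧ y ≤ u)
    (hx : l ≤ x ∧ x ≤ u) (hint : l < y → y < u → g = 0) (hl : y = l → 0 ≤ g)
    (hu : y = u → g ≤ 0) : 0 ≤ (x - y) * g := by
  rcases hy.1.eq_or_lt with rfl | hly
  · exact mul_nonneg (sub_nonneg.2 hx.1) (hl rfl)
  rcases hy.2.eq_or_lt with rfl | hyu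
  · exact mul_nonneg_of_nonpos_of_nonpos (sub_nonpos.2 hx.2) (hu rfl)
  simp [hint hly hyu]

theorem ContinuousLinearMap.apply_sub_nonneg_of_kkt {ι κ : Type*} [Fintype ι] [Fintype κ]
    [DecidableEq ι] [DecidableEq κ] (L : (ι → κ → ℝ) × (ι → ℝ) →L[ℝ] ℝ)
    {C d dstar : ι → κ → ℝ} {t tstar : ι → ℝ} {α β T F : ℝ} (hα0 : 0 ≤ α) (hβ0 : 0 ≤ β)
    (hslackα : α * ((∑ i, tstar i) - T) = 0)
    (hslackβ : β * ((∑ i, ∑ j, dstar i j * C i j) - F) = 0)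
    (hLt : ∀ i, L (0, Pi.single i 1) = -α)
    (hLd : ∀ i j, 0 ≤ (d i j - dstar i j) * (L (Pi.single i (Pi.single j 1), 0) + β * C i j))
    (htT : ∑ i, t i ≤ T) (hdF : ∑ i, ∑ j, d i j * C i j ≤ F) :
    0 ≤ L ((d, t) - (dstar, tstar)) := by
  have hbox_sum : 0 ≤ ∑ i, ∑ j, (d i j - dstar i j) *
      (L (Pi.single i (Pi.single j 1), 0) + β * C i j) :=
    sum_nonneg fun i _ => sum_nonneg fun j _ => hLd i j
  have hsplit : ∑ i, ∑ j, (d i j - dstar i j) * (L (Pi.single i (Pi.single j 1), 0) + β * C i j)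
      = ∑ i, ∑ j, (d i j - dstar i j) * L (Pi.single i (Pi.single j 1), 0)
        + β * ((∑ i, ∑ j, d i j * C i j) - ∑ i, ∑ j, dstar i j * C i j) := by
    simp only [mul_add, sum_add_distrib, mul_sum, ← sum_sub_distrib]
    congr! 3 with i _ j _
    ring
  have htime : ∑ i, (t i - tstar i) * -α = -α * ((∑ i, t i) - ∑ i, tstar i) := by
    rw [← sum_mul, sum_sub_distrib, mul_comm]
  rw [Prod.mk_sub_mk, L.apply_prod_eq_sum]
  simp only [Pi.sub_apply, hLt, htime]
  nlinarith [mul_le_mul_of_nonneg_left hdF hβ0, mul_le_mul_of_nonneg_left htT hα0]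

theorem stmt_17_general (N : ℕ) (B T F : ℝ)
    (hB : 0 < B)
    (a₁ a₂ : Fin N → ℝ) (ha₁ : ∀ i, 0 < a₁ i) (h12 : ∀ i, a₁ i ≤ a₂ i)
    (C P R D : Fin N → Fin 2 → ℝ)
    (V : (Fin N → Fin 2 → ℝ) → (Fin N → ℝ) → ℝ)
    (hV : ∀ (d : Fin N → Fin 2 → ℝ) (t : Fin N → ℝ), V d t =
      (∑ i, B * t i * (a₁ i * (2 : ℝ) ^ ((d i 0 + d i 1) / (B * t i))
        + (a₂ i - a₁ i) * (2 : ℝ) ^ (d i 1 / (B * t i)) - a₂ i))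
      + ∑ i, ∑ j, (R i j - d i j) * C i j * P i j)
    (dstar : Fin N → Fin 2 → ℝ) (tstar : Fin N → ℝ)
    (htstar : ∀ i, 0 < tstar i)
    (hbox : ∀ i j, D i j ≤ dstar i j ∧ dstar i j ≤ R i j)
    (α β : ℝ) (hα0 : 0 ≤ α) (hβ0 : 0 ≤ β)
    (hslackα : α * ((∑ i, tstar i) - T) = 0)
    (hslackβ : β * ((∑ i, ∑ j, dstar i j * C i j) - F) = 0)
    (hKt : ∀ i, HasDerivAt (fun s => V dstar (Function.update tstar i s))
      (-α) (tstar i))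
    (hKd : ∀ i j, ∃ G : ℝ,
      HasDerivAt
        (fun x => V (Function.update dstar i (Function.update (dstar i) j x)) tstar)
        (G - β * C i j) (dstar i j) ∧
      (D i j < dstar i j → dstar i j < R i j → G = 0) ∧
      (dstar i j = D i j → 0 ≤ G) ∧
      (dstar i j = R i j → G ≤ 0)) :
    ∀ (d : Fin N → Fin 2 → ℝ) (t : Fin N → ℝ),
      (∀ i, 0 < t i) → (∑ i, t i ≤ T) →
      (∑ i, ∑ j, d i j * C i j ≤ F) →
      (∀ i j, D i j ≤ d i j ∧ d i j ≤ R i j) →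
      V dstar tstar ≤ V d t := by
  intro d t ht htT hdF hd
  obtain rfl : V = fun d t => totalEnergy B a₁ a₂ C P R (d, t) :=
    funext fun d => funext fun t => hV d t
  set L := fderiv ℝ (totalEnergy B a₁ a₂ C P R) (dstar, tstar)
  have hL : HasFDerivAt (totalEnergy B a₁ a₂ C P R) L (dstar, tstar) :=
    (differentiableAt_totalEnergy hB.ne' a₁ a₂ C P R fun i => (htstar i).ne').hasFDerivAt
  have hLt : ∀ i, L (0, Pi.single i 1) = -α := fun i =>
    (hL.hasDerivAt_update_snd i).unique (hKt i)
  have hLd : ∀ i j,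
      0 ≤ (d i j - dstar i j) * (L (Pi.single i (Pi.single j 1), 0) + β * C i j) := by
    intro i j
    obtain ⟨G, hG, hint, hlo, hhi⟩ := hKd i j
    rw [(hL.hasDerivAt_update_fst i j).unique hG, sub_add_cancel]
    exact sub_mul_nonneg_of_complementarity (hbox i j) (hd i j) hint hlo hhi
  have hfirst := L.apply_sub_nonneg_of_kkt hα0 hβ0 hslackα hslackβ hLt hLd htT hdF
  have hconvex := (convexOn_totalEnergy hB (fun i => (ha₁ i).le) h12 C P R)
    |>.add_apply_sub_le_of_hasFDerivAt (x := (dstar, tstar)) (y := (d, t)) htstar ht hL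
  linarith

/-- Theorem 3, KKT sufficiency: if a feasible point `(d*, t*)` of the
total-energy minimization problem satisfies the KKT conditions with multipliers
`α, β ≥ 0` (complementary slackness, stationarity in each `tᵢ`, and the signed
stationarity conditions in each `d_{ij}` according to whether the box constraint is
active), then `(d*, t*)` is a global minimizer of `V` over the feasible set. -/
theorem stmt_17 (N : ℕ) (hN : 1 ≤ N) (B T F : ℝ)
    (hB : 0 < B) (hT : 0 < T) (hF : 0 < F)
    (a₁ a₂ : Fin N → ℝ) (ha₁ : ∀ i, 0 < a₁ i) (h12 : ∀ i, a₁ i ≤ a₂ i)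
    (C P R D : Fin N → Fin 2 → ℝ)
    (hC : ∀ i j, 0 < C i j) (hP : ∀ i j, 0 < P i j)
    (hD : ∀ i j, 0 ≤ D i j) (hDR : ∀ i j, D i j ≤ R i j)
    (V : (Fin N → Fin 2 → ℝ) → (Fin N → ℝ) → ℝ)
    (hV : ∀ (d : Fin N → Fin 2 → ℝ) (t : Fin N → ℝ), V d t =
      (∑ i, B * t i * (a₁ i * (2 : ℝ) ^ ((d i 0 + d i 1) / (B * t i))
        + (a₂ i - a₁ i) * (2 : ℝ) ^ (d i 1 / (B * t i)) - a₂ i))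
      + ∑ i, ∑ j, (R i j - d i j) * C i j * P i j)
    (dstar : Fin N → Fin 2 → ℝ) (tstar : Fin N → ℝ)
    (htstar : ∀ i, 0 < tstar i) (htsum : ∑ i, tstar i ≤ T)
    (hcap : ∑ i, ∑ j, dstar i j * C i j ≤ F)
    (hbox : ∀ i j, D i j ≤ dstar i j ∧ dstar i j ≤ R i j)
    (α β : ℝ) (hα0 : 0 ≤ α) (hβ0 : 0 ≤ β)
    (hslackα : α * ((∑ i, tstar i) - T) = 0)
    (hslackβ : β * ((∑ i, ∑ j, dstar i j * C i j) - F) = 0)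
    (hKt : ∀ i, HasDerivAt (fun s => V dstar (Function.update tstar i s))
      (-α) (tstar i))
    (hKd : ∀ i j, ∃ G : ℝ,
      HasDerivAt
        (fun x => V (Function.update dstar i (Function.update (dstar i) j x)) tstar)
        (G - β * C i j) (dstar i j) ∧
      (D i j < dstar i j → dstar i j < R i j → G = 0) ∧
      (dstar i j = D i j → 0 ≤ G) ∧
      (dstar i j = R i j → G ≤ 0)) :
    ∀ (d : Fin N → Fin 2 → ℝ) (t : Fin N → ℝ),
      (∀ i, 0 < t i) → (∑ i, t i ≤ T) →
      (∑ i, ∑ j, d i j * C i j ≤ F) →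
      (∀ i j, D i j ≤ d i j ∧ d i j ≤ R i j) →
      V dstar tstar ≤ V d t :=
  stmt_17_general N B T F hB a₁ a₂ ha₁ h12 C P R D V hV dstar tstar htstar hbox α β hα0 hβ0 hslackα
    hslackβ hKt hKd
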